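/- arXiv:2509.05191 — 3 statements merged into one kernel-verified Lean document; each statement's English description precedes it below -/
import Mathlib

section
/- Consider the augmented system (f_A, g_A, h_A) on ℝ × ℝ^{n_A} built from infinitely differentiable F : ℝ×ℝ^n → ℝ^n, G : ℝ×ℝ^n → ℝ^{n×r}, h : ℝ×ℝ^n → ℝ^m with r = m. Then for every l ∈ {1,…,m} and every natural number i ≥ 0, the Lie derivative L_{f_A}^i h_{A,l} does not depend on the augmented coordinates: for all t ∈ ℝ, x ∈ ℝ^n and all z̃, z̃' ∈ ℝ^{Σ_k ρ_k}, L_{f_A}^i h_{A,l}(t,(x,z̃)) = L_{f_A}^i h_{A,l}(t,(x,z̃')). -/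
noncomputable section

open Real Finset

/-- One-step Lie derivative of a scalar function `ψ` along the time-varying vector field `F`
on a general state space: `L_F ψ (t,x) = (∂ₓ ψ)·F + ∂ₜ ψ`, expressed as the total (Fréchet)
derivative of `ψ` in the direction `(1, F(t,x))`. -/
def lieF {E : Type*} [NormedAddCommGroup E] [NormedSpace ℝ E]
    (F : ℝ × E → E) (ψ : ℝ × E → ℝ) : ℝ × E → ℝ :=
  fun p => fderiv ℝ ψ p (1, F p)

/-- Iterated Lie derivative `L_F^j ψ`, with `L_F^0 ψ = ψ`. -/
def lieFIter {E : Type*} [NormedAddCommGroup E] [NormedSpace ℝ E]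
    (F : ℝ × E → E) (ψ : ℝ × E → ℝ) (j : ℕ) : ℝ × E → ℝ :=
  (lieF F)^[j] ψ

/-- Mixed Lie derivative `L_Ĝ ψ (t,x) = (∂ₓ ψ)(t,x)·Ĝ(t,x) ∈ ℝ^{1×r}` as a row vector,
where the matrix field `Ĝ` is given through its columns `Ĝ(t,x) j ∈ E`. -/
def lieGcol {E : Type*} [NormedAddCommGroup E] [NormedSpace ℝ E] {r : ℕ}
    (G : ℝ × E → Fin r → E) (ψ : ℝ × E → ℝ) : ℝ × E → Fin r → ℝ :=
  fun p j => fderiv ℝ ψ p (0, G p j)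

/-- The augmented state space `x_A = (x, z̃)`, where `z̃` stacks the scalars
`z_k^{(0)}, …, z_k^{(ρ_k-1)}` for `k = 1,…,m`. -/
abbrev AugState (n m : ℕ) (ρ : Fin m → ℕ) : Type :=
  (Fin n → ℝ) × (∀ k : Fin m, Fin (ρ k) → ℝ)

/-- The augmented vector field `f_A`: first block `F(t,x)`; the `k`-th slack block is the
shift `(z_k^{(1)}, …, z_k^{(ρ_k-1)}, 0)`. -/
def augF {n m : ℕ} (ρ : Fin m → ℕ) (F : ℝ × (Fin n → ℝ) → Fin n → ℝ) :
    ℝ × AugState n m ρ → AugState n m ρ :=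
  fun p =>
    (F (p.1, p.2.1),
      fun k i => if hi : (i : ℕ) + 1 < ρ k then p.2.2 k ⟨(i : ℕ) + 1, hi⟩ else 0)

/-- The columns of the augmented input matrix `g_A`: first `n` rows `G(t,x)·D(z)` with
`D(z) = diag(z_1^{(0)},…,z_r^{(0)})`; remaining rows zero, except that the row in the slot
of `z_k^{(ρ_k-1)}` equals the `k`-th standard basis row. -/
def augG {n m : ℕ} (ρ : Fin m → ℕ) (G : ℝ × (Fin n → ℝ) → Fin n → Fin m → ℝ) :
    ℝ × AugState n m ρ → Fin m → AugState n m ρ :=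
  fun p j =>
    ((fun a => G (p.1, p.2.1) a j *
        (if h : 0 < ρ j then p.2.2 j ⟨0, h⟩ else 0)),
      fun k i => if k = j ∧ (i : ℕ) = ρ k - 1 then 1 else 0)

/-- The augmented output `h_A(t,(x,z̃)) = h(t,x)`, `l`-th component. -/
def augH {n m : ℕ} (ρ : Fin m → ℕ) (h : ℝ × (Fin n → ℝ) → Fin m → ℝ) (l : Fin m) :
    ℝ × AugState n m ρ → ℝ :=
  fun p => h (p.1, p.2.1) l

/-- The integral augmented state space `x_I = (x_A, ξ)`. -/
abbrev IntState (n m : ℕ) (ρ : Fin m → ℕ) : Type :=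
  AugState n m ρ × (Fin m → ℝ)

/-- The bounded saturation function `s_β(v) = 2β(1/(e^{-v}+1) - 1/2)` (Eq. (16) of the paper). -/
def sBeta (β v : ℝ) : ℝ := 2 * β * (1 / (Real.exp (-v) + 1) - 1 / 2)

/-- The integral augmented vector field `f_I(t,(x_A,ξ)) = (f_A(t,x_A) + g_A(t,x_A)·s_β(ξ), 0)`. -/
def intF {n m : ℕ} (ρ : Fin m → ℕ) (F : ℝ × (Fin n → ℝ) → Fin n → ℝ)
    (G : ℝ × (Fin n → ℝ) → Fin n → Fin m → ℝ) (β : ℝ) :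
    ℝ × IntState n m ρ → IntState n m ρ :=
  fun p =>
    (augF ρ F (p.1, p.2.1) + ∑ j, sBeta β (p.2.2 j) • augG ρ G (p.1, p.2.1) j, 0)

/-- The columns of the integral augmented input matrix `g_I = (0 ; I_m)`. -/
def intG {n m : ℕ} (ρ : Fin m → ℕ) :
    ℝ × IntState n m ρ → Fin m → IntState n m ρ :=
  fun _ j => (0, Pi.single j 1)

/-- The integral augmented output `h_I(t,(x_A,ξ)) = h_A(t,x_A)`, `l`-th component. -/
def intH {n m : ℕ} (ρ : Fin m → ℕ) (h : ℝ × (Fin n → ℝ) → Fin m → ℝ) (l : Fin m) :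
    ℝ × IntState n m ρ → ℝ :=
  fun p => augH ρ h l (p.1, p.2.1)

/-! If a linear map `p` relates the vector fields `F'` and `F` (`p ∘ F' = F ∘ (id × p)`), the Lie
derivative along `F'` of a function pulled back by `id × p` is the pullback of the Lie derivative
along `F`: this is the chain rule `D(ψ ∘ (id × p)) (1, F') = Dψ (1, p F') = Dψ (1, F)`. For the
augmented system, `p` forgets the slack coordinates `z̃` and the `x`-block of `f_A` is `F(t, x)`,
so every `L_{f_A}^i h_{A,l}` is a pullback of `L_F^i h_l` and cannot see `z̃`. -/

open scoped ContDiff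

section Pullback

variable {E E' : Type*} [NormedAddCommGroup E] [NormedSpace ℝ E]
  [NormedAddCommGroup E'] [NormedSpace ℝ E']

theorem ContDiff.lieF {F : ℝ × E → E} {ψ : ℝ × E → ℝ}
    (hψ : ContDiff ℝ ∞ ψ) (hF : ContDiff ℝ ∞ F) : ContDiff ℝ ∞ (lieF F ψ) :=
  (hψ.fderiv_right le_rfl).clm_apply (contDiff_const.prodMk hF)

theorem ContDiff.lieFIter {F : ℝ × E → E} {ψ : ℝ × E → ℝ}
    (hψ : ContDiff ℝ ∞ ψ) (hF : ContDiff ℝ ∞ F) (i : ℕ) :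
    ContDiff ℝ ∞ (lieFIter F ψ i) := by
  induction i with
  | zero => exact hψ
  | succ i ih =>
    rw [_root_.lieFIter, Function.iterate_succ_apply']
    exact ih.lieF hF

variable (p : E' →L[ℝ] E) {F' : ℝ × E' → E'} {F : ℝ × E → E}

theorem lieF_comp_prodMap (hFF' : ∀ q, p (F' q) = F (q.1, p q.2)) {ψ : ℝ × E → ℝ}
    (hψ : Differentiable ℝ ψ) :
    lieF F' (ψ ∘ Prod.map id p) = lieF F ψ ∘ Prod.map id p := by
  funext q
  have hchain : fderiv ℝ (ψ ∘ Prod.map id p) q =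
      (fderiv ℝ ψ (q.1, p q.2)).comp ((ContinuousLinearMap.id ℝ ℝ).prodMap p) :=
    ((hψ _).hasFDerivAt.comp q ((ContinuousLinearMap.id ℝ ℝ).prodMap p).hasFDerivAt).fderiv
  change fderiv ℝ (ψ ∘ Prod.map id p) q (1, F' q) = fderiv ℝ ψ (q.1, p q.2) (1, F (q.1, p q.2))
  simp [hchain, hFF']

theorem lieFIter_comp_prodMap (hFF' : ∀ q, p (F' q) = F (q.1, p q.2)) (hF : ContDiff ℝ ∞ F)
    {ψ : ℝ × E → ℝ} (hψ : ContDiff ℝ ∞ ψ) (i : ℕ) :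
    lieFIter F' (ψ ∘ Prod.map id p) i = lieFIter F ψ i ∘ Prod.map id p := by
  induction i with
  | zero => rfl
  | succ i ih =>
    simp only [lieFIter, Function.iterate_succ_apply'] at ih ⊢
    rw [ih]
    exact lieF_comp_prodMap p hFF' ((hψ.lieFIter hF i).differentiable (by simp))

end Pullback

theorem augmented_lie_independent_of_slack_general
    {n m : ℕ} (ρ : Fin m → ℕ)
    (F : ℝ × (Fin n → ℝ) → Fin n → ℝ)
    (h : ℝ × (Fin n → ℝ) → Fin m → ℝ)
    (hF : ContDiff ℝ (⊤ : ℕ∞) F)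
    (hh : ContDiff ℝ (⊤ : ℕ∞) h)
    (l : Fin m) (i : ℕ) (t : ℝ) (x : Fin n → ℝ)
    (z z' : ∀ k : Fin m, Fin (ρ k) → ℝ) :
    lieFIter (augF ρ F) (augH ρ h l) i (t, (x, z)) =
      lieFIter (augF ρ F) (augH ρ h l) i (t, (x, z')) := by
  have hpull : augH ρ h l = (fun q => h q l) ∘ Prod.map id (ContinuousLinearMap.fst ℝ _ _) := rfl
  have hhl : ContDiff ℝ ∞ fun q => h q l := (contDiff_apply ℝ ℝ l).comp hh
  rw [hpull, lieFIter_comp_prodMap _ (F' := augF ρ F) (fun _ => rfl) hF hhl]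
  rfl

/-- **Induction claim in the proof of Proposition 1 of the paper.**
The iterated Lie derivatives `L_{f_A}^i h_{A,l}` do not depend on the augmented
(slack) coordinates `z̃`. -/
theorem augmented_lie_independent_of_slack
    {n m : ℕ} (ρ : Fin m → ℕ) (hρ : ∀ k, 1 ≤ ρ k)
    (F : ℝ × (Fin n → ℝ) → Fin n → ℝ)
    (G : ℝ × (Fin n → ℝ) → Fin n → Fin m → ℝ)
    (h : ℝ × (Fin n → ℝ) → Fin m → ℝ)
    (hF : ContDiff ℝ (⊤ : ℕ∞) F) (hG : ContDiff ℝ (⊤ : ℕ∞) G)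
    (hh : ContDiff ℝ (⊤ : ℕ∞) h)
    (l : Fin m) (i : ℕ) (t : ℝ) (x : Fin n → ℝ)
    (z z' : ∀ k : Fin m, Fin (ρ k) → ℝ) :
    lieFIter (augF ρ F) (augH ρ h l) i (t, (x, z)) =
      lieFIter (augF ρ F) (augH ρ h l) i (t, (x, z')) :=
  augmented_lie_independent_of_slack_general ρ F h hF hh l i t x z z'
end
end

section
/- Consider the augmented system (f_A, g_A, h_A) on ℝ × ℝ^{n_A} built from infinitely differentiable F : ℝ×ℝ^n → ℝ^n, G : ℝ×ℝ^n → ℝ^{n×r}, h : ℝ×ℝ^n → ℝ^m with r = m. For each l ∈ {1,…,m} and each natural number j ≥ 0, the function L_{f_A}^j h_{A,l}(t,(x,z̃)) does not depend on z̃; writing it as Ĥ_{l,j}(t,x), the mixed Lie derivative satisfies, for every (t,x_A) with x_A = (x,z̃): L_{g_A} L_{f_A}^j h_{A,l}(t,x_A) = (∂_x Ĥ_{l,j})(t,x) · G(t,x) · D(z) ∈ ℝ^{1×r}, where ∂_x Ĥ_{l,j} is the row vector of partial derivatives of Ĥ_{l,j} in x and D(z) = diag(z_1^{(0)},…,z_r^{(0)}).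 -/
noncomputable section

open Real Finset

/-! The output `h_A` depends on `(t, x)` only, and the projection `π (t, x, z̃) = (t, x)`
carries `(1, f_A)` to `(1, F)`. Hence `L_{f_A}` maps pull-backs `φ ∘ π` to pull-backs
`(L_F φ) ∘ π`, so `L_{f_A}^j h_{A,l} = (L_F^j h_l) ∘ π`: this is slack independent, with
`Ĥ_{l,j} = L_F^j h_l`. Differentiating a pull-back along the `i`-th column of `g_A` sees only
its `x`-block `G(t,x)_{·i} z_i^{(0)}`. -/

open scoped ContDiff

variable {E E' : Type*} [NormedAddCommGroup E] [NormedSpace ℝ E]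
  [NormedAddCommGroup E'] [NormedSpace ℝ E']

theorem contDiff_lieF {F : ℝ × E → E} {ψ : ℝ × E → ℝ} (hF : ContDiff ℝ ∞ F)
    (hψ : ContDiff ℝ ∞ ψ) : ContDiff ℝ ∞ (lieF F ψ) :=
  (hψ.fderiv_right (by exact_mod_cast le_top)).clm_apply (contDiff_const.prodMk hF)

theorem contDiff_lieFIter {F : ℝ × E → E} {ψ : ℝ × E → ℝ} (hF : ContDiff ℝ ∞ F)
    (hψ : ContDiff ℝ ∞ ψ) (j : ℕ) : ContDiff ℝ ∞ (lieFIter F ψ j) := by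
  induction j with
  | zero => exact hψ
  | succ j ih =>
    rw [lieFIter, Function.iterate_succ_apply']
    exact contDiff_lieF hF ih

def timeProj (P : E →L[ℝ] E') : ℝ × E →L[ℝ] ℝ × E' :=
  (ContinuousLinearMap.id ℝ ℝ).prodMap P

@[simp]
theorem timeProj_apply (P : E →L[ℝ] E') (p : ℝ × E) : timeProj P p = (p.1, P p.2) := rfl

theorem fderiv_comp_timeProj_apply (P : E →L[ℝ] E') {φ : ℝ × E' → ℝ}
    (hφ : Differentiable ℝ φ) (p v : ℝ × E) :
    fderiv ℝ (φ ∘ timeProj P) p v = fderiv ℝ φ (timeProj P p) (timeProj P v) := by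
  rw [fderiv_comp p (hφ _) (timeProj P).differentiableAt, ContinuousLinearMap.fderiv]
  rfl

theorem lieF_comp_timeProj (P : E →L[ℝ] E') {FA : ℝ × E → E} {F : ℝ × E' → E'}
    (hFA : ∀ p, P (FA p) = F (p.1, P p.2)) {φ : ℝ × E' → ℝ} (hφ : Differentiable ℝ φ) :
    lieF FA (φ ∘ timeProj P) = lieF F φ ∘ timeProj P := by
  funext p
  simp only [lieF, Function.comp_apply, fderiv_comp_timeProj_apply P hφ, timeProj_apply, hFA]

theorem lieFIter_comp_timeProj (P : E →L[ℝ] E') {FA : ℝ × E → E} {F : ℝ × E' → E'}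
    (hFA : ∀ p, P (FA p) = F (p.1, P p.2)) (hF : ContDiff ℝ ∞ F) {φ : ℝ × E' → ℝ}
    (hφ : ContDiff ℝ ∞ φ) (j : ℕ) :
    lieFIter FA (φ ∘ timeProj P) j = lieFIter F φ j ∘ timeProj P := by
  induction j with
  | zero => rfl
  | succ j ih =>
    simp only [lieFIter, Function.iterate_succ_apply'] at ih ⊢
    rw [ih]
    exact lieF_comp_timeProj P hFA ((contDiff_lieFIter hF hφ j).differentiable (by simp))

theorem lieGcol_comp_timeProj {r : ℕ} (P : E →L[ℝ] E') (GA : ℝ × E → Fin r → E)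
    {φ : ℝ × E' → ℝ} (hφ : Differentiable ℝ φ) (p : ℝ × E) (i : Fin r) :
    lieGcol GA (φ ∘ timeProj P) p i = fderiv ℝ φ (timeProj P p) (0, P (GA p i)) := by
  rw [lieGcol, fderiv_comp_timeProj_apply P hφ]
  rfl

theorem augH_eq_comp_timeProj {n m : ℕ} (ρ : Fin m → ℕ) (h : ℝ × (Fin n → ℝ) → Fin m → ℝ)
    (l : Fin m) :
    augH ρ h l = (fun q => h q l) ∘ timeProj (.fst ℝ (Fin n → ℝ) (∀ k, Fin (ρ k) → ℝ)) := rfl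

theorem fst_augG {n m : ℕ} {ρ : Fin m → ℕ} (G : ℝ × (Fin n → ℝ) → Fin n → Fin m → ℝ)
    (t : ℝ) (x : Fin n → ℝ) (z : ∀ k : Fin m, Fin (ρ k) → ℝ) {i : Fin m} (hi : 0 < ρ i) :
    (augG ρ G (t, (x, z)) i).1 = z i ⟨0, hi⟩ • fun a => G (t, x) a i := by
  ext a
  simp [augG, hi, mul_comm]

theorem augmented_mixed_lie_formula_general
    {n m : ℕ} (ρ : Fin m → ℕ) (hρ : ∀ k, 1 ≤ ρ k)
    (F : ℝ × (Fin n → ℝ) → Fin n → ℝ)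
    (G : ℝ × (Fin n → ℝ) → Fin n → Fin m → ℝ)
    (h : ℝ × (Fin n → ℝ) → Fin m → ℝ)
    (hF : ContDiff ℝ (⊤ : ℕ∞) F)
    (hh : ContDiff ℝ (⊤ : ℕ∞) h)
    (l : Fin m) (j : ℕ) :
    -- `L_{f_A}^j h_{A,l}` does not depend on `z̃`
    (∀ (t : ℝ) (x : Fin n → ℝ) (z z' : ∀ k : Fin m, Fin (ρ k) → ℝ),
      lieFIter (augF ρ F) (augH ρ h l) j (t, (x, z)) =
        lieFIter (augF ρ F) (augH ρ h l) j (t, (x, z'))) ∧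
    -- the factorisation `L_{g_A} L_{f_A}^j h_{A,l} = (∂ₓ Ĥ_{l,j})·G·D(z)`, componentwise
    (∀ (t : ℝ) (x : Fin n → ℝ) (z : ∀ k : Fin m, Fin (ρ k) → ℝ) (i : Fin m),
      lieGcol (augG ρ G) (lieFIter (augF ρ F) (augH ρ h l) j) (t, (x, z)) i =
        fderiv ℝ (fun q : ℝ × (Fin n → ℝ) =>
            lieFIter (augF ρ F) (augH ρ h l) j (q.1, (q.2, 0)))
          (t, x) (0, fun a => G (t, x) a i) * z i ⟨0, hρ i⟩) := by
  set Ĥ := lieFIter F (fun q => h q l) j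
  have hĤ : Differentiable ℝ Ĥ :=
    (contDiff_lieFIter hF (contDiff_pi.1 hh l) j).differentiable (by simp)
  set P := ContinuousLinearMap.fst ℝ (Fin n → ℝ) (∀ k, Fin (ρ k) → ℝ)
  have hfactor : lieFIter (augF ρ F) (augH ρ h l) j = Ĥ ∘ timeProj P := by
    rw [augH_eq_comp_timeProj]
    exact lieFIter_comp_timeProj P (fun _ => rfl) hF (contDiff_pi.1 hh l) j
  refine ⟨fun t x z z' => by simp [hfactor, P], fun t x z i => ?_⟩
  rw [hfactor, lieGcol_comp_timeProj _ _ hĤ]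
  simp only [P, timeProj_apply, ContinuousLinearMap.coe_fst', fst_augG G t x z (hρ i),
    Function.comp_apply, Prod.mk.eta]
  rw [← Prod.smul_zero_mk, map_smul, smul_eq_mul, mul_comm]

/-- **Key formula (Eq. (44)) in the proof of Proposition 1 of the paper.**
`L_{f_A}^j h_{A,l}` does not depend on the slack coordinates `z̃`, and the mixed Lie
derivative factors as `L_{g_A} L_{f_A}^j h_{A,l}(t,x_A) = (∂ₓ Ĥ_{l,j})(t,x)·G(t,x)·D(z)`,
where `Ĥ_{l,j}(t,x) := L_{f_A}^j h_{A,l}(t,(x,0))` is the slack-independent representative. -/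
theorem augmented_mixed_lie_formula
    {n m : ℕ} (ρ : Fin m → ℕ) (hρ : ∀ k, 1 ≤ ρ k)
    (F : ℝ × (Fin n → ℝ) → Fin n → ℝ)
    (G : ℝ × (Fin n → ℝ) → Fin n → Fin m → ℝ)
    (h : ℝ × (Fin n → ℝ) → Fin m → ℝ)
    (hF : ContDiff ℝ (⊤ : ℕ∞) F) (hG : ContDiff ℝ (⊤ : ℕ∞) G)
    (hh : ContDiff ℝ (⊤ : ℕ∞) h)
    (l : Fin m) (j : ℕ) :
    -- `L_{f_A}^j h_{A,l}` does not depend on `z̃`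
    (∀ (t : ℝ) (x : Fin n → ℝ) (z z' : ∀ k : Fin m, Fin (ρ k) → ℝ),
      lieFIter (augF ρ F) (augH ρ h l) j (t, (x, z)) =
        lieFIter (augF ρ F) (augH ρ h l) j (t, (x, z'))) ∧
    -- the factorisation `L_{g_A} L_{f_A}^j h_{A,l} = (∂ₓ Ĥ_{l,j})·G·D(z)`, componentwise
    (∀ (t : ℝ) (x : Fin n → ℝ) (z : ∀ k : Fin m, Fin (ρ k) → ℝ) (i : Fin m),
      lieGcol (augG ρ G) (lieFIter (augF ρ F) (augH ρ h l) j) (t, (x, z)) i =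
        fderiv ℝ (fun q : ℝ × (Fin n → ℝ) =>
            lieFIter (augF ρ F) (augH ρ h l) j (q.1, (q.2, 0)))
          (t, x) (0, fun a => G (t, x) a i) * z i ⟨0, hρ i⟩) :=
  augmented_mixed_lie_formula_general ρ hρ F G h hF hh l j
end
end

section
/- Consider the augmented system (f_A, g_A, h_A) on ℝ × ℝ^{n_A} built from infinitely differentiable F : ℝ×ℝ^n → ℝ^n, G : ℝ×ℝ^n → ℝ^{n×r}, h : ℝ×ℝ^n → ℝ^m with r = m, and its integral augmented system (f_I, g_I, h_I) on ℝ × ℝ^{n_A+m} for a parameter β > 0. Fix l ∈ {1,…,m} and σ_l ≥ 1, and suppose L_{g_A} L_{f_A}^{i} h_{A,l}(t,x_A) = 0 for all (t,x_A) and all 0 ≤ i ≤ σ_l − 2. Then for every 0 ≤ i ≤ σ_l − 1 and every (t, x_A, ξ) ∈ ℝ × ℝ^{n_A} × ℝ^m: L_{f_I}^i h_{I,l}(t,(x_A,ξ)) = L_{f_A}^i h_{A,l}(t,x_A). -/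
noncomputable section

open Real Finset

/-!
The output `h_I` only sees the `x_A`-block, and the `x_A`-block of `f_I` is `f_A` plus a
combination of the columns of `g_A`. Hence one Lie derivative along `f_I` of a function of
`(t, x_A)` alone is its Lie derivative along `f_A` plus a combination of its `L_{g_A}`-derivatives,
and the hypothesis kills the latter as long as `i ≤ σ_l - 2`; induct on `i`.
-/

section Lift

variable {E V : Type*} [NormedAddCommGroup E] [NormedSpace ℝ E]
  [NormedAddCommGroup V] [NormedSpace ℝ V]

lemma lieF_contDiff {F : ℝ × E → E} {ψ : ℝ × E → ℝ}
    (hF : ContDiff ℝ (⊤ : ℕ∞) F) (hψ : ContDiff ℝ (⊤ : ℕ∞) ψ) :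
    ContDiff ℝ (⊤ : ℕ∞) (lieF F ψ) :=
  (hψ.fderiv_right (by simp)).clm_apply (contDiff_const.prodMk hF)

lemma lieFIter_succ (F : ℝ × E → E) (ψ : ℝ × E → ℝ) (i : ℕ) :
    lieFIter F ψ (i + 1) = lieF F (lieFIter F ψ i) :=
  Function.iterate_succ_apply' _ _ _

lemma lieFIter_contDiff {F : ℝ × E → E} {ψ : ℝ × E → ℝ}
    (hF : ContDiff ℝ (⊤ : ℕ∞) F) (hψ : ContDiff ℝ (⊤ : ℕ∞) ψ) (i : ℕ) :
    ContDiff ℝ (⊤ : ℕ∞) (lieFIter F ψ i) := by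
  induction i with
  | zero => exact hψ
  | succ i ih => rw [lieFIter_succ]; exact lieF_contDiff hF ih

lemma lieF_comp_fst_snd_fst {FI : ℝ × (E × V) → E × V} {ψ : ℝ × E → ℝ} {p : ℝ × (E × V)}
    (hψ : DifferentiableAt ℝ ψ (p.1, p.2.1)) :
    lieF FI (fun q => ψ (q.1, q.2.1)) p = fderiv ℝ ψ (p.1, p.2.1) (1, (FI p).1) := by
  let pr : (ℝ × (E × V)) →L[ℝ] (ℝ × E) :=
    (ContinuousLinearMap.id ℝ ℝ).prodMap (ContinuousLinearMap.fst ℝ E V)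
  change fderiv ℝ (ψ ∘ pr) p (1, FI p) = _
  rw [fderiv_comp p hψ pr.differentiableAt, pr.fderiv]
  rfl

lemma fderiv_apply_one_add_sum_smul {r : ℕ} (F : ℝ × E → E) (G : ℝ × E → Fin r → E)
    (ψ : ℝ × E → ℝ) (p : ℝ × E) (c : Fin r → ℝ) :
    fderiv ℝ ψ p (1, F p + ∑ j, c j • G p j) =
      lieF F ψ p + ∑ j, c j * lieGcol G ψ p j := by
  have hdir : ((1, F p + ∑ j, c j • G p j) : ℝ × E) =
      (1, F p) + ∑ j, c j • ((0, G p j) : ℝ × E) := by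
    ext <;> simp [Prod.fst_sum, Prod.snd_sum]
  simp only [hdir, map_add, map_sum, map_smul, smul_eq_mul, lieF, lieGcol]

theorem lieFIter_lift_eq {r : ℕ} {F : ℝ × E → E} {G : ℝ × E → Fin r → E}
    {FI : ℝ × (E × V) → E × V} (c : ℝ × (E × V) → Fin r → ℝ)
    (hFI : ∀ p, (FI p).1 = F (p.1, p.2.1) + ∑ j, c p j • G (p.1, p.2.1) j)
    {ψ : ℝ × E → ℝ} (hF : ContDiff ℝ (⊤ : ℕ∞) F) (hψ : ContDiff ℝ (⊤ : ℕ∞) ψ) {σ : ℕ}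
    (hzero : ∀ i : ℕ, i + 2 ≤ σ → ∀ p, lieGcol G (lieFIter F ψ i) p = 0) :
    ∀ i ≤ σ - 1, ∀ p : ℝ × (E × V),
      lieFIter FI (fun q => ψ (q.1, q.2.1)) i p = lieFIter F ψ i (p.1, p.2.1) := by
  intro i
  induction i with
  | zero => intro _ p; rfl
  | succ i ih =>
    intro hi p
    have hψi : DifferentiableAt ℝ (lieFIter F ψ i) (p.1, p.2.1) :=
      (lieFIter_contDiff hF hψ i).differentiable (by simp) _
    have hGi : lieGcol G (lieFIter F ψ i) (p.1, p.2.1) = 0 := hzero i (by omega) _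
    rw [lieFIter_succ, lieFIter_succ, funext (ih (by omega)), lieF_comp_fst_snd_fst hψi, hFI,
      fderiv_apply_one_add_sum_smul]
    simp [hGi]

end Lift

lemma augF_contDiff {n m : ℕ} (ρ : Fin m → ℕ) {F : ℝ × (Fin n → ℝ) → Fin n → ℝ}
    (hF : ContDiff ℝ (⊤ : ℕ∞) F) : ContDiff ℝ (⊤ : ℕ∞) (augF ρ F) := by
  refine (hF.comp (contDiff_fst.prodMk (contDiff_fst.comp contDiff_snd))).prodMk ?_
  refine contDiff_pi.2 fun k => contDiff_pi.2 fun i => ?_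
  split_ifs with hi
  · have hzk : ContDiff ℝ (⊤ : ℕ∞) fun p : ℝ × AugState n m ρ => p.2.2 k :=
      contDiff_pi.1 (contDiff_snd.comp contDiff_snd) k
    exact contDiff_pi.1 hzk _
  · exact contDiff_const

lemma augH_contDiff {n m : ℕ} (ρ : Fin m → ℕ) {h : ℝ × (Fin n → ℝ) → Fin m → ℝ}
    (l : Fin m) (hh : ContDiff ℝ (⊤ : ℕ∞) h) :
    ContDiff ℝ (⊤ : ℕ∞) (augH ρ h l) :=
  (contDiff_pi.1 hh l).comp (contDiff_fst.prodMk (contDiff_fst.comp contDiff_snd))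

theorem integral_lie_eq_augmented_lie_general
    {n m : ℕ} (ρ : Fin m → ℕ)
    (F : ℝ × (Fin n → ℝ) → Fin n → ℝ)
    (G : ℝ × (Fin n → ℝ) → Fin n → Fin m → ℝ)
    (h : ℝ × (Fin n → ℝ) → Fin m → ℝ)
    (hF : ContDiff ℝ (⊤ : ℕ∞) F)
    (hh : ContDiff ℝ (⊤ : ℕ∞) h)
    (β : ℝ)
    (l : Fin m) (σl : ℕ)
    (hzero : ∀ i : ℕ, i + 2 ≤ σl →
      ∀ p : ℝ × AugState n m ρ,
        lieGcol (augG ρ G) (lieFIter (augF ρ F) (augH ρ h l) i) p = 0) :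
    ∀ i ≤ σl - 1, ∀ (t : ℝ) (xA : AugState n m ρ) (ξ : Fin m → ℝ),
      lieFIter (intF ρ F G β) (intH ρ h l) i (t, (xA, ξ)) =
        lieFIter (augF ρ F) (augH ρ h l) i (t, xA) := by
  intro i hi t xA ξ
  exact lieFIter_lift_eq (fun (p : ℝ × IntState n m ρ) j => sBeta β (p.2.2 j)) (fun _ => rfl)
    (augF_contDiff ρ hF) (augH_contDiff ρ l hh) hzero i hi (t, (xA, ξ))

/-- **First claim (Eq. (46)) in the proof of Corollary 1 of the paper.**
For `0 ≤ i ≤ σ_l - 1`, the iterated Lie derivatives of the integral augmented system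
coincide with those of the augmented system: `L_{f_I}^i h_{I,l}(t,(x_A,ξ)) = L_{f_A}^i h_{A,l}(t,x_A)`. -/
theorem integral_lie_eq_augmented_lie
    {n m : ℕ} (ρ : Fin m → ℕ) (hρ : ∀ k, 1 ≤ ρ k)
    (F : ℝ × (Fin n → ℝ) → Fin n → ℝ)
    (G : ℝ × (Fin n → ℝ) → Fin n → Fin m → ℝ)
    (h : ℝ × (Fin n → ℝ) → Fin m → ℝ)
    (hF : ContDiff ℝ (⊤ : ℕ∞) F) (hG : ContDiff ℝ (⊤ : ℕ∞) G)
    (hh : ContDiff ℝ (⊤ : ℕ∞) h)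
    (β : ℝ) (hβ : 0 < β)
    (l : Fin m) (σl : ℕ) (hσl : 1 ≤ σl)
    (hzero : ∀ i : ℕ, i + 2 ≤ σl →
      ∀ p : ℝ × AugState n m ρ,
        lieGcol (augG ρ G) (lieFIter (augF ρ F) (augH ρ h l) i) p = 0) :
    ∀ i ≤ σl - 1, ∀ (t : ℝ) (xA : AugState n m ρ) (ξ : Fin m → ℝ),
      lieFIter (intF ρ F G β) (intH ρ h l) i (t, (xA, ξ)) =
        lieFIter (augF ρ F) (augH ρ h l) i (t, xA) :=
  integral_lie_eq_augmented_lie_general ρ F G h hF hh β l σl hzero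
end
end
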